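/- arXiv:1609.02688 — 3 statements merged into one kernel-verified Lean document; each statement's English description precedes it below -/
import Mathlib

section
/- Assume all cross-border units are distinct (k_1 < k_2 < ... < k_{n-1}). Define cluster probabilities φ_{2i} = a_i + b_i for i = 1,...,n-1 and φ_{2i-1} = 1 - b_{i-1} - a_i for i = 1,...,n (with b_0 = 0 and a_n = 0, where a_i = i - C_{k_i-1}, b_i = C_{k_i} - i). Then each φ_j ∈ [0,1] and ∑_{j=1}^{2n-1} φ_j = n. -/
/-! The even cluster `2i` is the single cross-border unit `k_i`, so `φ_{2i} = a_i + b_i = π_{k_i}`.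
The odd cluster `2i - 1` is the block of units strictly between `k_{i-1}` and `k_i`, so `φ_{2i-1}`
is an increment of the cumulated sums, hence nonnegative; it is at most `1` because `a_i` and
`b_{i-1}` are nonnegative. In the total, each `a_i` and `b_i` enters once with each sign, which
leaves the `n` ones of the odd clusters. -/

open Finset

theorem Icc_one_two_mul_sub_one (n : ℕ) :
    Icc 1 (2 * n - 1) = (Icc 1 (n - 1)).image (2 * ·) ∪ (Icc 1 n).image (2 * · - 1) := by
  ext j
  simp only [mem_union, mem_image, mem_Icc]
  constructor
  · rintro ⟨hj1, hjn⟩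
    rcases j.even_or_odd' with ⟨i, rfl | rfl⟩
    · exact .inl ⟨i, by omega, rfl⟩
    · exact .inr ⟨i + 1, by omega, by omega⟩
  · rintro (⟨i, hi, rfl⟩ | ⟨i, hi, rfl⟩) <;> omega

theorem sum_Icc_one_two_mul_sub_one {M : Type*} [AddCommMonoid M] (f : ℕ → M) (n : ℕ) :
    ∑ j ∈ Icc 1 (2 * n - 1), f j =
      ∑ i ∈ Icc 1 (n - 1), f (2 * i) + ∑ i ∈ Icc 1 n, f (2 * i - 1) := by
  have hdisj : Disjoint ((Icc 1 (n - 1)).image (2 * ·)) ((Icc 1 n).image (2 * · - 1)) := by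
    simp only [disjoint_left, mem_image, mem_Icc]
    rintro _ ⟨i, -, rfl⟩ ⟨i', hi', h⟩
    omega
  rw [Icc_one_two_mul_sub_one, sum_union hdisj,
    sum_image (by intro i _ j _ h; simp only at h; omega),
    sum_image (by intro i hi j hj h; simp only [coe_Icc, Set.mem_Icc] at hi hj h; omega)]

theorem sum_add_sum_one_sub_sub {R : Type*} [CommRing R] (a b : ℕ → R) {n : ℕ}
    (hn : 0 < n) :
    ∑ i ∈ Icc 1 (n - 1), (a i + b i) + ∑ i ∈ Icc 1 n, (1 - b (i - 1) - a i) =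
      n - b 0 - a n := by
  obtain ⟨m, rfl⟩ := Nat.exists_eq_add_of_le' hn
  clear hn
  rw [Nat.add_sub_cancel]
  induction m with
  | zero => simp
  | succ m ih =>
    rw [sum_Icc_succ_top (by omega), sum_Icc_succ_top (by omega), ← add_assoc,
      add_right_comm _ (a _ + b _), ih]
    push_cast
    ring

theorem monotoneOn_sum_Icc_one {M : Type*} [AddCommMonoid M] [PartialOrder M]
    [IsOrderedAddMonoid M] {π : ℕ → M} {N : ℕ} (hπ : ∀ k ∈ Icc 1 N, 0 ≤ π k) :
    MonotoneOn (fun k => ∑ l ∈ Icc 1 k, π l) (Set.Iic N) := by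
  intro k _ m hm hkm
  exact sum_le_sum_of_subset_of_nonneg (Icc_subset_Icc_right hkm)
    fun l hl _ => hπ l (Icc_subset_Icc_right hm hl)

theorem sum_Icc_one_sub_sum_Icc_one_pred {G : Type*} [AddCommGroup G] (π : ℕ → G) {k : ℕ}
    (hk : 1 ≤ k) :
    ∑ l ∈ Icc 1 k, π l - ∑ l ∈ Icc 1 (k - 1), π l = π k := by
  obtain ⟨m, rfl⟩ := Nat.exists_eq_add_of_le' hk
  rw [Nat.add_sub_cancel, sum_Icc_succ_top (by omega), add_sub_cancel_left]

section CrossBorder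

variable {C : ℕ → ℝ} {N n : ℕ} {K : ℕ → ℕ} {a b : ℕ → ℝ}

theorem cross_border_a_nonneg (hlt : ∀ i ∈ Icc 1 (n - 1), C (K i - 1) < i)
    (ha : ∀ i ∈ Icc 1 (n - 1), a i = i - C (K i - 1)) (han : a n = 0) :
    ∀ i ∈ Icc 1 n, 0 ≤ a i := by
  intro i hi
  rcases eq_or_ne i n with rfl | hin
  · exact han.ge
  · have hi' : i ∈ Icc 1 (n - 1) := by simp only [mem_Icc] at hi ⊢; omega
    linarith [ha i hi', hlt i hi']

theorem cross_border_b_nonneg (hle : ∀ i ∈ Icc 1 (n - 1), (i : ℝ) ≤ C (K i))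
    (hb : ∀ i ∈ Icc 1 (n - 1), b i = C (K i) - i) (hb0 : b 0 = 0) :
    ∀ i ∈ Icc 1 n, 0 ≤ b (i - 1) := by
  intro i hi
  rcases eq_or_ne i 1 with rfl | hi1
  · exact hb0.ge
  · have hi' : i - 1 ∈ Icc 1 (n - 1) := by simp only [mem_Icc] at hi ⊢; omega
    linarith [hb _ hi', hle _ hi']

/-- The witnesses are `k = k_{i-1}` and `l = k_i - 1`, with sentinels `k₀ = 0`, `kₙ = N + 1`. -/
theorem exists_one_sub_sub_eq_sub (hC0 : C 0 = 0) (hCN : C N = n)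
    (hKN : ∀ i ∈ Icc 1 (n - 1), K i ≤ N)
    (hKmono : ∀ i ∈ Icc 1 (n - 1), ∀ j ∈ Icc 1 (n - 1), i < j → K i < K j)
    (ha : ∀ i ∈ Icc 1 (n - 1), a i = i - C (K i - 1))
    (hb : ∀ i ∈ Icc 1 (n - 1), b i = C (K i) - i) (han : a n = 0) (hb0 : b 0 = 0)
    {i : ℕ} (hi : i ∈ Icc 1 n) :
    ∃ k l, k ≤ l ∧ l ≤ N ∧ 1 - b (i - 1) - a i = C l - C k := by
  obtain ⟨hi1, hin⟩ := mem_Icc.1 hi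
  have mem {j : ℕ} (h1 : 1 ≤ j) (hj : j < n) : j ∈ Icc 1 (n - 1) := mem_Icc.2 ⟨h1, by omega⟩
  obtain ⟨k, hk⟩ : ∃ k, k = if i = 1 then 0 else K (i - 1) := ⟨_, rfl⟩
  obtain ⟨l, hl⟩ : ∃ l, l = if i = n then N else K i - 1 := ⟨_, rfl⟩
  have hbk : b (i - 1) = C k - (i - 1 : ℕ) := by
    split_ifs at hk with h1
    · simp [hk, h1, hb0, hC0]
    · exact hk ▸ hb _ (mem (by omega) (by omega))
  have hal : a i = i - C l := by
    split_ifs at hl with h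
    · rw [hl, hCN, h, han, sub_self]
    · exact hl ▸ ha i (mem hi1 (by omega))
  refine ⟨k, l, ?_, ?_, ?_⟩
  · split_ifs at hk hl with h1 h
    · omega
    · omega
    · exact hk ▸ hl ▸ hKN (i - 1) (mem (by omega) (by omega))
    · have := hKmono (i - 1) (mem (by omega) (by omega)) i (mem hi1 (by omega)) (by omega)
      omega
  · split_ifs at hl with h
    · exact hl.le
    · have := hKN i (mem hi1 (by omega))
      omega
  · rw [hbk, hal, Nat.cast_sub hi1]
    push_cast
    ring

end CrossBorder

theorem cluster_probabilities_valid_general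
    (N n : ℕ) (hn : 0 < n)
    (π : ℕ → ℝ)
    (hπpos : ∀ k ∈ Finset.Icc 1 N, 0 < π k)
    (hπle : ∀ k ∈ Finset.Icc 1 N, π k ≤ 1)
    (hsum : ∑ k ∈ Finset.Icc 1 N, π k = (n : ℝ))
    (C : ℕ → ℝ)
    (hC : ∀ k, C k = ∑ l ∈ Finset.Icc 1 k, π l)
    (K : ℕ → ℕ)
    (hK : ∀ i ∈ Finset.Icc 1 (n - 1),
      K i ∈ Finset.Icc 1 N ∧ C (K i - 1) < (i : ℝ) ∧ (i : ℝ) ≤ C (K i))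
    (hKmono : ∀ i ∈ Finset.Icc 1 (n - 1), ∀ j ∈ Finset.Icc 1 (n - 1),
      i < j → K i < K j)
    (a b : ℕ → ℝ)
    (ha : ∀ i ∈ Finset.Icc 1 (n - 1), a i = (i : ℝ) - C (K i - 1))
    (hb : ∀ i ∈ Finset.Icc 1 (n - 1), b i = C (K i) - (i : ℝ))
    (han : a n = 0) (hb0 : b 0 = 0)
    (φ : ℕ → ℝ)
    (hφeven : ∀ i ∈ Finset.Icc 1 (n - 1), φ (2 * i) = a i + b i)
    (hφodd : ∀ i ∈ Finset.Icc 1 n, φ (2 * i - 1) = 1 - b (i - 1) - a i) :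
    (∀ j ∈ Finset.Icc 1 (2 * n - 1), 0 ≤ φ j ∧ φ j ≤ 1) ∧
    ∑ j ∈ Finset.Icc 1 (2 * n - 1), φ j = (n : ℝ) := by
  have hCmono : MonotoneOn C (Set.Iic N) :=
    funext hC ▸ monotoneOn_sum_Icc_one fun k hk => (hπpos k hk).le
  refine ⟨?_, ?_⟩
  · simp only [Icc_one_two_mul_sub_one, forall_mem_union, forall_mem_image]
    refine ⟨fun i hi => ?_, fun i hi => ?_⟩
    · have hKi := mem_Icc.1 (hK i hi).1
      rw [hφeven i hi, ha i hi, hb i hi, sub_add_sub_cancel', hC, hC,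
        sum_Icc_one_sub_sum_Icc_one_pred π hKi.1]
      exact ⟨(hπpos _ (hK i hi).1).le, hπle _ (hK i hi).1⟩
    · obtain ⟨k, l, hkl, hlN, hφi⟩ := exists_one_sub_sub_eq_sub (by simp [hC]) (hC N ▸ hsum)
        (fun i hi => (mem_Icc.1 (hK i hi).1).2) hKmono ha hb han hb0 hi
      rw [hφodd i hi]
      refine ⟨hφi ▸ sub_nonneg.2 (hCmono (hkl.trans hlN) hlN hkl), ?_⟩
      linarith [cross_border_a_nonneg (fun i hi => (hK i hi).2.1) ha han i hi,
        cross_border_b_nonneg (fun i hi => (hK i hi).2.2) hb hb0 i hi]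
  · rw [sum_Icc_one_two_mul_sub_one, sum_congr rfl hφeven, sum_congr rfl hφodd,
      sum_add_sum_one_sub_sub a b hn, han, hb0, sub_zero, sub_zero]

/-- under distinct cross-border units, the cluster probabilities
`φ_{2i} = a i + b i` (i = 1,…,n-1) and `φ_{2i-1} = 1 - b (i-1) - a i`
(i = 1,…,n, with `b 0 = 0`, `a n = 0`) all lie in `[0,1]` and sum to `n`. -/
theorem cluster_probabilities_valid
    (N n : ℕ) (hN : 0 < N) (hn : 0 < n)
    (π : ℕ → ℝ)
    (hπpos : ∀ k ∈ Finset.Icc 1 N, 0 < π k)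
    (hπle : ∀ k ∈ Finset.Icc 1 N, π k ≤ 1)
    (hsum : ∑ k ∈ Finset.Icc 1 N, π k = (n : ℝ))
    (C : ℕ → ℝ)
    (hC : ∀ k, C k = ∑ l ∈ Finset.Icc 1 k, π l)
    (K : ℕ → ℕ)
    (hK : ∀ i ∈ Finset.Icc 1 (n - 1),
      K i ∈ Finset.Icc 1 N ∧ C (K i - 1) < (i : ℝ) ∧ (i : ℝ) ≤ C (K i))
    (hKmono : ∀ i ∈ Finset.Icc 1 (n - 1), ∀ j ∈ Finset.Icc 1 (n - 1),
      i < j → K i < K j)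
    (a b : ℕ → ℝ)
    (ha : ∀ i ∈ Finset.Icc 1 (n - 1), a i = (i : ℝ) - C (K i - 1))
    (hb : ∀ i ∈ Finset.Icc 1 (n - 1), b i = C (K i) - (i : ℝ))
    (han : a n = 0) (hb0 : b 0 = 0)
    (φ : ℕ → ℝ)
    (hφeven : ∀ i ∈ Finset.Icc 1 (n - 1), φ (2 * i) = a i + b i)
    (hφodd : ∀ i ∈ Finset.Icc 1 n, φ (2 * i - 1) = 1 - b (i - 1) - a i) :
    (∀ j ∈ Finset.Icc 1 (2 * n - 1), 0 ≤ φ j ∧ φ j ≤ 1) ∧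
    ∑ j ∈ Finset.Icc 1 (2 * n - 1), φ j = (n : ℝ) :=
  cluster_probabilities_valid_general N n hn π hπpos hπle hsum C hC K hK hKmono a b ha hb han hb0 φ
    hφeven hφodd
end

section
/- Let S be a fixed-size-n without-replacement design with inclusion probabilities π_k, t̂ = ∑_{k∈S} y_k/π_k the HT-estimator, and v_HH = (n/(n−1)) ∑_{k∈S} ( y_k/π_k − t̂/n )². Then E(v_HH) − Var(t̂) = (n/(n−1)) [ V_ms − Var(t̂) ], where V_ms = ∑_{k∈U} π_k ( y_k/π_k − t_y/n )² is the multinomial-sampling variance. Consequently, if Var(t̂) ≤ V_ms then E(v_HH) ≥ Var(t̂), i.e., v_HH is a conservative variance estimator. -/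
/-- Expectation on a finite probability space given by a weight function. -/
noncomputable def pexp {Ω : Type*} [Fintype Ω] (P f : Ω → ℝ) : ℝ :=
  ∑ ω, P ω * f ω

/-- Variance on a finite probability space given by a weight function. -/
noncomputable def pvar {Ω : Type*} [Fintype Ω] (P f : Ω → ℝ) : ℝ :=
  ∑ ω, P ω * (f ω - pexp P f) ^ 2

/-!
Since the design has fixed size `n`, `v_HH = n/(n-1) · (∑_{k∈S} a_k² - t̂²/n)` with `a_k = y_k/π_k`,
and averaging a sum over `S` against the design replaces it by the `π`-weighted sum over `U`.
Hence `E(v_HH) = n/(n-1) · (∑_U π_k a_k² - E(t̂²)/n)`, while `V_ms = ∑_U π_k a_k² - t_y²/n` and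
`Var(t̂) = E(t̂²) - t_y²` because `t̂` is unbiased. The identity is then the scalar relation
`n/(n-1) = 1 + (n/(n-1))/n`, and conservativeness follows since `n/(n-1) ≥ 0`.
-/

open Finset

-- When `∑ w = 0` both sides are `∑ w a²`, since `x / 0 = 0`.
theorem Finset.sum_mul_sub_weighted_mean_sq {ι : Type*} (s : Finset ι) (w a : ι → ℝ) :
    ∑ i ∈ s, w i * (a i - (∑ j ∈ s, w j * a j) / ∑ j ∈ s, w j) ^ 2 =
      ∑ i ∈ s, w i * a i ^ 2 - (∑ i ∈ s, w i * a i) ^ 2 / ∑ i ∈ s, w i := by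
  set W := ∑ j ∈ s, w j
  set M := ∑ j ∈ s, w j * a j
  have expand : ∀ i ∈ s, w i * (a i - M / W) ^ 2 =
      w i * a i ^ 2 - 2 * (M / W) * (w i * a i) + (M / W) ^ 2 * w i := fun i _ => by ring
  rw [sum_congr rfl expand, sum_add_distrib, sum_sub_distrib, ← mul_sum, ← mul_sum]
  by_cases hW : W = 0
  · simp [hW]
  · field_simp
    ring

theorem Finset.sum_sub_mean_sq {ι : Type*} (s : Finset ι) (a : ι → ℝ) :
    ∑ i ∈ s, (a i - (∑ j ∈ s, a j) / #s) ^ 2 = ∑ i ∈ s, a i ^ 2 - (∑ i ∈ s, a i) ^ 2 / #s := by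
  simpa using s.sum_mul_sub_weighted_mean_sq (fun _ => 1) a

section FiniteProbability

variable {Ω : Type*} [Fintype Ω] (P : Ω → ℝ)

theorem pexp_sub (f g : Ω → ℝ) : pexp P (fun ω => f ω - g ω) = pexp P f - pexp P g := by
  simp only [pexp, mul_sub, sum_sub_distrib]

theorem pexp_const_mul (c : ℝ) (f : Ω → ℝ) : pexp P (fun ω => c * f ω) = c * pexp P f := by
  simp only [pexp, mul_sum]
  exact sum_congr rfl fun ω _ => by ring

theorem pexp_div_const (f : Ω → ℝ) (c : ℝ) : pexp P (fun ω => f ω / c) = pexp P f / c := by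
  simp only [pexp, sum_div, mul_div_assoc]

theorem pvar_eq_pexp_sq_sub_sq (hP : ∑ ω, P ω = 1) (f : Ω → ℝ) :
    pvar P f = pexp P (fun ω => f ω ^ 2) - pexp P f ^ 2 := by
  simpa [pvar, pexp, hP] using (univ : Finset Ω).sum_mul_sub_weighted_mean_sq P f

theorem pexp_sum_mem_eq_sum_incl_mul {ι : Type*} [Fintype ι] [DecidableEq ι]
    (S : Ω → Finset ι) (π : ι → ℝ)
    (hincl : ∀ k, ∑ ω, P ω * (if k ∈ S ω then 1 else 0) = π k) (g : ι → ℝ) :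
    pexp P (fun ω => ∑ k ∈ S ω, g k) = ∑ k, π k * g k := by
  calc pexp P (fun ω => ∑ k ∈ S ω, g k)
      = ∑ ω, ∑ k, P ω * (if k ∈ S ω then 1 else 0) * g k := by
        refine sum_congr rfl fun ω _ => ?_
        simp [mul_sum, sum_ite_mem]
    _ = ∑ k, π k * g k := by
        rw [sum_comm]
        simp only [← sum_mul, hincl]

end FiniteProbability

theorem hh_variance_estimator_bias_and_conservative_general
    (N n : ℕ) (hn : 2 ≤ n)
    (π y : Fin N → ℝ) (hπpos : ∀ k, 0 < π k)
    (hsum : ∑ k, π k = (n : ℝ))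
    (ty : ℝ) (hty : ty = ∑ k, y k)
    (Ω : Type*) [Fintype Ω]
    (P : Ω → ℝ) (hPsum : ∑ ω, P ω = 1)
    (S : Ω → Finset (Fin N)) (hsize : ∀ ω, (S ω).card = n)
    (hincl : ∀ k, ∑ ω, P ω * (if k ∈ S ω then 1 else 0) = π k)
    (that : Ω → ℝ) (hthat : ∀ ω, that ω = ∑ k ∈ S ω, y k / π k)
    (vHH : Ω → ℝ)
    (hvHH : ∀ ω, vHH ω =
      ((n : ℝ) / ((n : ℝ) - 1)) * ∑ k ∈ S ω, (y k / π k - that ω / n) ^ 2)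
    (Vms : ℝ) (hVms : Vms = ∑ k, π k * (y k / π k - ty / n) ^ 2) :
    pexp P vHH - pvar P that = ((n : ℝ) / ((n : ℝ) - 1)) * (Vms - pvar P that) ∧
    (pvar P that ≤ Vms → pvar P that ≤ pexp P vHH) := by
  set a : Fin N → ℝ := fun k => y k / π k
  set c : ℝ := (n : ℝ) / ((n : ℝ) - 1) with hc_def
  have hn' : (2 : ℝ) ≤ n := by exact_mod_cast hn
  have hc : c = 1 + c / n := by
    rw [hc_def]
    field_simp [show (n : ℝ) - 1 ≠ 0 by linarith]
    ring
  have hπa : ∀ k, π k * a k = y k := fun k => mul_div_cancel₀ _ (hπpos k).ne'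
  have hunbiased : pexp P that = ty := by
    simp only [funext hthat, pexp_sum_mem_eq_sum_incl_mul P S π hincl, hπa, hty]
  have hvHH_expand : ∀ ω, vHH ω = c * (∑ k ∈ S ω, a k ^ 2 - that ω ^ 2 / n) := fun ω => by
    have h := (S ω).sum_sub_mean_sq a
    rw [hsize ω, ← hthat ω] at h
    rw [hvHH ω, ← h]
  have hEv : pexp P vHH = c * (∑ k, π k * a k ^ 2 - pexp P (fun ω => that ω ^ 2) / n) := by
    rw [funext hvHH_expand, pexp_const_mul, pexp_sub, pexp_div_const,
      pexp_sum_mem_eq_sum_incl_mul P S π hincl]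
  have hVar : pvar P that = pexp P (fun ω => that ω ^ 2) - ty ^ 2 := by
    rw [pvar_eq_pexp_sq_sub_sq P hPsum, hunbiased]
  have hVms_expand : Vms = ∑ k, π k * a k ^ 2 - ty ^ 2 / n := by
    have h := univ.sum_mul_sub_weighted_mean_sq π a
    simp only [hπa, hsum, ← hty] at h
    rw [hVms, ← h]
  have hbias : pexp P vHH - pvar P that = c * (Vms - pvar P that) := by
    rw [hEv, hVar, hVms_expand]
    linear_combination (pexp P (fun ω => that ω ^ 2) - ty ^ 2) * hc
  refine ⟨hbias, fun hle => ?_⟩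
  have hc_nonneg : 0 ≤ c := div_nonneg (by linarith) (by linarith)
  linarith [mul_nonneg hc_nonneg (sub_nonneg.mpr hle)]

/-- for a fixed-size-`n` without-replacement design with
inclusion probabilities `π`, HT estimator `t̂` and Hansen–Hurvitz-type
variance estimator `v_HH`, one has
`E(v_HH) − Var(t̂) = (n/(n−1)) (V_ms − Var(t̂))` where
`V_ms = ∑_k π k (y k/π k − t_y/n)²`; consequently if `Var(t̂) ≤ V_ms`
then `v_HH` is conservative: `Var(t̂) ≤ E(v_HH)`. -/
theorem hh_variance_estimator_bias_and_conservative
    (N n : ℕ) (hn : 2 ≤ n)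
    (π y : Fin N → ℝ) (hπpos : ∀ k, 0 < π k) (hπle : ∀ k, π k ≤ 1)
    (hsum : ∑ k, π k = (n : ℝ))
    (ty : ℝ) (hty : ty = ∑ k, y k)
    (Ω : Type*) [Fintype Ω]
    (P : Ω → ℝ) (hPnonneg : ∀ ω, 0 ≤ P ω) (hPsum : ∑ ω, P ω = 1)
    (S : Ω → Finset (Fin N)) (hsize : ∀ ω, (S ω).card = n)
    (hincl : ∀ k, ∑ ω, P ω * (if k ∈ S ω then 1 else 0) = π k)
    (that : Ω → ℝ) (hthat : ∀ ω, that ω = ∑ k ∈ S ω, y k / π k)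
    (vHH : Ω → ℝ)
    (hvHH : ∀ ω, vHH ω =
      ((n : ℝ) / ((n : ℝ) - 1)) * ∑ k ∈ S ω, (y k / π k - that ω / n) ^ 2)
    (Vms : ℝ) (hVms : Vms = ∑ k, π k * (y k / π k - ty / n) ^ 2) :
    pexp P vHH - pvar P that = ((n : ℝ) / ((n : ℝ) - 1)) * (Vms - pvar P that) ∧
    (pvar P that ≤ Vms → pvar P that ≤ pexp P vHH) :=
  hh_variance_estimator_bias_and_conservative_general N n hn π y hπpos hsum ty hty Ω P hPsum S hsize
    hincl that hthat vHH hvHH Vms hVms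
end

section
/- For ordered pivotal sampling of n = 2 units from a clustered population U_c = {u₁, u₂, u₃} with probabilities φ₁ = 1 − a₁, φ₂ = a₁ + b₁, φ₃ = 1 − b₁ (0 < a₁, 0 ≤ b₁, a₁ + b₁ ≤ 1), the variance of the Horvitz–Thompson estimator t̂_Y = Y̌_{F₁} + Y̌_{F₂} is less than or equal to the multinomial variance ∑_{i=1}^3 φ_i ( Y̌_i − t_Y/2 )², for every Y ∈ ℝ³, where Y̌_i = Y_i/φ_i and t_Y = Y₁ + Y₂ + Y₃. -/
lemma key (a b x y z : ℝ) (ha : 0 < a) (hb : 0 ≤ b) (hab : a + b ≤ 1) :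
    b*(x+y-((1-a)*x+(a+b)*y+(1-b)*z))^2 + (1-a-b)*(x+z-((1-a)*x+(a+b)*y+(1-b)*z))^2
      + a*(y+z-((1-a)*x+(a+b)*y+(1-b)*z))^2
    ≤ (1-a)*(x-((1-a)*x+(a+b)*y+(1-b)*z)/2)^2 + (a+b)*(y-((1-a)*x+(a+b)*y+(1-b)*z)/2)^2
      + (1-b)*(z-((1-a)*x+(a+b)*y+(1-b)*z)/2)^2 := by
  nlinarith [sq_nonneg ((b+(1-a-b))*(x-y) + (a+(1-a-b))*(y-z)),
    sq_nonneg ((b+(1-a-b))*(x-y) - (a+(1-a-b))*(y-z)),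
    mul_nonneg (mul_nonneg (sub_nonneg.2 hab) hb) (sq_nonneg (x-z)),
    mul_nonneg (mul_nonneg (sub_nonneg.2 hab) ha.le) (sq_nonneg (x-y)),
    mul_nonneg (mul_nonneg ha.le hb) (sq_nonneg (y-z)),
    mul_nonneg (mul_nonneg ha.le hb) (sq_nonneg (x-y)),
    mul_nonneg (mul_nonneg ha.le hb) (sq_nonneg (x+y-2*z))]


/-- base case `n = 2` of Theorem 1: ordered pivotal sampling of
2 units from `U_c = {u₁,u₂,u₃}` with `φ = (1−a₁, a₁+b₁, 1−b₁)`.  The four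
outcomes `(F₁,F₂)` are: `(u₁,u₂)` w.p. `p₁ b₁`, `(u₁,u₃)` w.p. `p₁(1−b₁)`,
`(u₂,u₁)` w.p. `(1−p₁) b₁`, `(u₂,u₃)` w.p. `(1−p₁)(1−b₁)`, where
`p₁ = 1 − a₁/(1−b₁)`.  For every `Y ∈ ℝ³`, the variance of the HT estimator
`t̂_Y = Y̌_{F₁} + Y̌_{F₂}` is at most the multinomial variance
`∑_{i=1}^3 φ_i (Y̌_i − t_Y/2)²`, with `Y̌ i = Y i/φ i`, `t_Y = Y₁+Y₂+Y₃`. -/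
theorem ops_more_efficient_than_multinomial_n_two
    (a₁ b₁ : ℝ) (ha₁ : 0 < a₁) (hb₁ : 0 ≤ b₁) (hab : a₁ + b₁ ≤ 1)
    (p₁ : ℝ) (hp₁ : p₁ = 1 - a₁ / (1 - b₁))
    (φ : Fin 3 → ℝ) (hφ : φ = ![1 - a₁, a₁ + b₁, 1 - b₁])
    (hφpos : ∀ i, 0 < φ i)
    (Y : Fin 3 → ℝ)
    (P : Fin 4 → ℝ)
    (hP : P = ![p₁ * b₁, p₁ * (1 - b₁), (1 - p₁) * b₁, (1 - p₁) * (1 - b₁)])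
    (T : Fin 4 → ℝ)
    (hT : T = ![Y 0 / φ 0 + Y 1 / φ 1, Y 0 / φ 0 + Y 2 / φ 2,
                Y 1 / φ 1 + Y 0 / φ 0, Y 1 / φ 1 + Y 2 / φ 2]) :
    pvar P T ≤ ∑ i, φ i * (Y i / φ i - (Y 0 + Y 1 + Y 2) / 2) ^ 2 := by
  have h0 : (0:ℝ) < 1 - a₁ := by have := hφpos 0; simpa [hφ] using this
  have h1 : (0:ℝ) < a₁ + b₁ := by have := hφpos 1; simpa [hφ] using this
  have h2 : (0:ℝ) < 1 - b₁ := by have := hφpos 2; simpa [hφ] using this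
  subst hp₁ hφ hP hT
  set x : ℝ := Y 0 / (1 - a₁) with hx
  set y : ℝ := Y 1 / (a₁ + b₁) with hy
  set z : ℝ := Y 2 / (1 - b₁) with hz
  have hY0 : Y 0 = (1 - a₁) * x := by rw [hx]; field_simp
  have hY1 : Y 1 = (a₁ + b₁) * y := by rw [hy]; field_simp
  have hY2 : Y 2 = (1 - b₁) * z := by rw [hz]; field_simp
  have hE : pexp ![(1 - a₁/(1-b₁)) * b₁, (1 - a₁/(1-b₁)) * (1 - b₁),
      (1 - (1 - a₁/(1-b₁))) * b₁, (1 - (1 - a₁/(1-b₁))) * (1 - b₁)]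
      ![x + y, x + z, y + x, y + z]
      = (1 - a₁) * x + (a₁ + b₁) * y + (1 - b₁) * z := by
    simp only [pexp, Fin.sum_univ_four, Matrix.cons_val_zero, Matrix.cons_val_one,
      Matrix.head_cons, Matrix.cons_val_two, Matrix.tail_cons, Matrix.cons_val_three]
    field_simp
    ring
  have hTeq : (![Y 0 / ![1-a₁, a₁+b₁, 1-b₁] 0 + Y 1 / ![1-a₁, a₁+b₁, 1-b₁] 1,
      Y 0 / ![1-a₁, a₁+b₁, 1-b₁] 0 + Y 2 / ![1-a₁, a₁+b₁, 1-b₁] 2,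
      Y 1 / ![1-a₁, a₁+b₁, 1-b₁] 1 + Y 0 / ![1-a₁, a₁+b₁, 1-b₁] 0,
      Y 1 / ![1-a₁, a₁+b₁, 1-b₁] 1 + Y 2 / ![1-a₁, a₁+b₁, 1-b₁] 2] : Fin 4 → ℝ)
      = ![x + y, x + z, y + x, y + z] := by
    funext i
    fin_cases i <;> simp [hx, hy, hz]
  rw [hTeq]
  have hL : pvar ![(1 - a₁/(1-b₁)) * b₁, (1 - a₁/(1-b₁)) * (1 - b₁),
      (1 - (1 - a₁/(1-b₁))) * b₁, (1 - (1 - a₁/(1-b₁))) * (1 - b₁)]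
      ![x + y, x + z, y + x, y + z]
      = b₁*(x+y-((1-a₁)*x+(a₁+b₁)*y+(1-b₁)*z))^2
        + (1-a₁-b₁)*(x+z-((1-a₁)*x+(a₁+b₁)*y+(1-b₁)*z))^2
        + a₁*(y+z-((1-a₁)*x+(a₁+b₁)*y+(1-b₁)*z))^2 := by
    simp only [pvar, hE, Fin.sum_univ_four, Matrix.cons_val_zero, Matrix.cons_val_one,
      Matrix.head_cons, Matrix.cons_val_two, Matrix.tail_cons, Matrix.cons_val_three]
    field_simp
    ring
  have hR : ∑ i, (![1-a₁, a₁+b₁, 1-b₁] : Fin 3 → ℝ) i *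
      (Y i / (![1-a₁, a₁+b₁, 1-b₁] : Fin 3 → ℝ) i - (Y 0 + Y 1 + Y 2) / 2) ^ 2
      = (1-a₁)*(x-((1-a₁)*x+(a₁+b₁)*y+(1-b₁)*z)/2)^2
        + (a₁+b₁)*(y-((1-a₁)*x+(a₁+b₁)*y+(1-b₁)*z)/2)^2
        + (1-b₁)*(z-((1-a₁)*x+(a₁+b₁)*y+(1-b₁)*z)/2)^2 := by
    simp only [Fin.sum_univ_three, Matrix.cons_val_zero, Matrix.cons_val_one,
      Matrix.head_cons, Matrix.cons_val_two, Matrix.tail_cons, hY0, hY1, hY2]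
    field_simp
  rw [hL, hR]
  exact key a₁ b₁ x y z ha₁ hb₁ hab
end
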